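/- In M₀, for all m, n ≥ 0 one has i^(n+1) j^n · i^m j^(m+1) = i^(m+n+1) j^(m+n+1), ij · i^m j^(m+1) = i^(m+1) j^(m+2), and i^(n+1) j^n · ij = i^(n+2) j^(n+1). -/
import Mathlib


noncomputable section

/-- The generator `i` of the free monoid on two letters. -/
def iF : FreeMonoid (Fin 2) := FreeMonoid.of 0

/-- The generator `j` of the free monoid on two letters. -/
def jF : FreeMonoid (Fin 2) := FreeMonoid.of 1

/-- Defining relations of Reineke's composition monoid of the Kronecker quiver:
(1) `i^m j^(m+1) i^(m+1) j^(m+2) = i^(2m+1) j^(2m+3)` for all `m ≥ 0`;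
(2) `i^(n+2) j^(n+1) i^(n+1) j^n = i^(2n+3) j^(2n+1)` for all `n ≥ 0`;
(3) `(ij)^m = i^m j^m` for all `m ≥ 1`. -/
inductive KroneckerMonoidRel : FreeMonoid (Fin 2) → FreeMonoid (Fin 2) → Prop
  | preproj (m : ℕ) :
      KroneckerMonoidRel
        (iF ^ m * jF ^ (m + 1) * (iF ^ (m + 1) * jF ^ (m + 2)))
        (iF ^ (2 * m + 1) * jF ^ (2 * m + 3))
  | preinj (n : ℕ) :
      KroneckerMonoidRel
        (iF ^ (n + 2) * jF ^ (n + 1) * (iF ^ (n + 1) * jF ^ n))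
        (iF ^ (2 * n + 3) * jF ^ (2 * n + 1))
  | delta (m : ℕ) (hm : 1 ≤ m) :
      KroneckerMonoidRel ((iF * jF) ^ m) (iF ^ m * jF ^ m)

/-- `M₀`, Reineke's composition monoid of the Kronecker quiver, presented by
generators `i, j` and the relations above. -/
abbrev M0 : Type := (conGen KroneckerMonoidRel).Quotient

/-- The generator `i` of `M₀`. -/
def iM : M0 := (iF : M0)

/-- The generator `j` of `M₀`. -/
def jM : M0 := (jF : M0)

lemma delta_pow (k : ℕ) : (iM * jM) ^ k = iM ^ k * jM ^ k := by
  cases k with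
  | zero => simp
  | succ n =>
    have h : (conGen KroneckerMonoidRel) ((iF * jF) ^ (n + 1))
        (iF ^ (n + 1) * jF ^ (n + 1)) :=
      ConGen.Rel.of _ _ (KroneckerMonoidRel.delta (n + 1) (Nat.succ_le_succ (Nat.zero_le n)))
    have h2 := (Con.eq (conGen KroneckerMonoidRel)).mpr h
    simpa [iM, jM, ← Con.coe_mk', map_mul, map_pow] using h2

lemma P_eq (k : ℕ) : iM ^ k * jM ^ (k + 1) = (iM * jM) ^ k * jM := by
  rw [delta_pow, pow_succ jM, mul_assoc]

lemma I_eq (k : ℕ) : iM ^ (k + 1) * jM ^ k = iM * (iM * jM) ^ k := by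
  rw [pow_succ' iM, mul_assoc, delta_pow]

/-- In `M₀`, for all `m, n ≥ 0`:
`i^(n+1) j^n · i^m j^(m+1) = i^(m+n+1) j^(m+n+1)`,
`ij · i^m j^(m+1) = i^(m+1) j^(m+2)` and
`i^(n+1) j^n · ij = i^(n+2) j^(n+1)`. -/
theorem monoid_mixed_relations (m n : ℕ) :
    (iM ^ (n + 1) * jM ^ n) * (iM ^ m * jM ^ (m + 1))
        = iM ^ (m + n + 1) * jM ^ (m + n + 1) ∧
    (iM * jM) * (iM ^ m * jM ^ (m + 1)) = iM ^ (m + 1) * jM ^ (m + 2) ∧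
    (iM ^ (n + 1) * jM ^ n) * (iM * jM) = iM ^ (n + 2) * jM ^ (n + 1) := by
  refine ⟨?_, ?_, ?_⟩
  · rw [I_eq, P_eq]
    have h1 : iM * (iM * jM) ^ n * ((iM * jM) ^ m * jM)
        = iM * (iM * jM) ^ (n + m) * jM := by
      rw [mul_assoc, ← mul_assoc ((iM * jM) ^ n), ← pow_add, mul_assoc]
    rw [h1, delta_pow, Nat.add_comm n m, ← mul_assoc iM, ← pow_succ',
      mul_assoc, ← pow_succ]
  · rw [P_eq, P_eq, ← mul_assoc, ← pow_succ']
  · rw [I_eq, I_eq, mul_assoc, ← pow_succ]
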